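/- arXiv:2605.30238 — 2 statements merged into one kernel-verified Lean document; each statement's English description precedes it below -/
import Mathlib

section
/- Let W be a bipartite RQT process matrix on (ℂ²)^{⊗4} (factors ordered A_1, A_2, B_1, B_2), i.e. W = conj(W), W ⪰ 0, and Tr[W(M^{A_1A_2}⊗M^{B_1B_2})] = 1 for all real CPTP Choi matrices M^{A_1A_2}, M^{B_1B_2}. Let P_S denote the orthogonal projection (with respect to the Hilbert–Schmidt inner product) onto Herm_ℝ^{A_1A_2} ⊗ Herm_ℝ^{B_1B_2}. Then: (i) Tr[W(M^{A_1A_2}⊗M^{B_1B_2})] = Tr[P_S(W)(M^{A_1A_2}⊗M^{B_1B_2})] for all real Choi operators M^{A_1A_2} ∈ Herm_ℝ^{A_1A_2}, M^{B_1B_2} ∈ Herm_ℝ^{B_1B_2}; and (ii) the Pauli expansion of P_S(W) is supported only on the OCB-allowed support types 1, A_1, B_1, A_1B_1, A_2B_1, A_1B_2, A_1A_2B_1, A_1B_1B_2; in particular every OCB-forbidden Pauli component of W is invisible to local real tomography. -/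
open Matrix BigOperators
open scoped Kronecker ComplexOrder

noncomputable section

/-- Entrywise complex conjugation of a matrix (in the computational basis). -/
def conjM {m n : Type*} (M : Matrix m n ℂ) : Matrix m n ℂ := M.map (starRingEnd ℂ)

/-- Partial trace over the second tensor factor. -/
def ptr2 {a b : Type*} [Fintype b] (M : Matrix (a × b) (a × b) ℂ) : Matrix a a ℂ :=
  fun i j => ∑ z, M (i, z) (j, z)

def σx : Matrix (Fin 2) (Fin 2) ℂ := !![0, 1; 1, 0]
def σy : Matrix (Fin 2) (Fin 2) ℂ := !![0, -Complex.I; Complex.I, 0]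
def σz : Matrix (Fin 2) (Fin 2) ℂ := !![1, 0; 0, -1]

/-- The Choi space of a qubit input-output pair. -/
abbrev Q2 := Fin 2 × Fin 2

/-- Real CPTP Choi matrix on a qubit pair. -/
def IsRealCPTPChoi (M : Matrix Q2 Q2 ℂ) : Prop :=
  conjM M = M ∧ M.PosSemidef ∧ ptr2 M = 1

/-- The ten generators of the local real self-adjoint operator space
`Herm_ℝ^{X₁X₂}`. -/
def hermRGen : Set (Matrix Q2 Q2 ℂ) :=
  {(1 : Matrix (Fin 2) (Fin 2) ℂ) ⊗ₖ 1,
   σx ⊗ₖ 1, σz ⊗ₖ 1,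
   (1 : Matrix (Fin 2) (Fin 2) ℂ) ⊗ₖ σx, (1 : Matrix (Fin 2) (Fin 2) ℂ) ⊗ₖ σz,
   σx ⊗ₖ σx, σx ⊗ₖ σz, σz ⊗ₖ σx, σz ⊗ₖ σz, σy ⊗ₖ σy}

/-- `Herm_ℝ^{X₁X₂}` as a real subspace of the local Choi operator space. -/
def HermR : Submodule ℝ (Matrix Q2 Q2 ℂ) := Submodule.span ℝ hermRGen

/-- `K_X = span_ℝ {I, σx^{X₁}, σz^{X₁}}`. -/
def KX : Submodule ℝ (Matrix Q2 Q2 ℂ) :=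
  Submodule.span ℝ {(1 : Matrix (Fin 2) (Fin 2) ℂ) ⊗ₖ 1, σx ⊗ₖ 1, σz ⊗ₖ 1}

/-- `K_X⁰ = span_ℝ {σx^{X₁}, σz^{X₁}}`. -/
def KX0 : Submodule ℝ (Matrix Q2 Q2 ℂ) :=
  Submodule.span ℝ {σx ⊗ₖ (1 : Matrix (Fin 2) (Fin 2) ℂ), σz ⊗ₖ 1}

/-- `T_X = {N ∈ Herm_ℝ^{X₁X₂} : Tr_{X₂} N = 0}`. -/
def TXset : Set (Matrix Q2 Q2 ℂ) := {N | N ∈ HermR ∧ ptr2 N = 0}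

/-- The real span of Kronecker products `a ⊗ₖ b` with `a ∈ P` and `b ∈ Q`; for
subspaces `P, Q` this realises the tensor product `P ⊗ Q` inside the bipartite
operator space.  The tensor factors are grouped as `(A₁A₂) × (B₁B₂)`. -/
def kronSpan (P Q : Set (Matrix Q2 Q2 ℂ)) :
    Submodule ℝ (Matrix (Q2 × Q2) (Q2 × Q2) ℂ) :=
  Submodule.span ℝ {m | ∃ a ∈ P, ∃ b ∈ Q, m = a ⊗ₖ b}

/-- The Pauli basis `{I, σx, σy, σz}` of a qubit. -/
def pauli : Fin 4 → Matrix (Fin 2) (Fin 2) ℂ := ![1, σx, σy, σz]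

/-- A four-qubit Pauli string on `A₁A₂B₁B₂`, grouped as `(A₁A₂) × (B₁B₂)`. -/
def pauli4 (μ ν κ ξ : Fin 4) : Matrix (Q2 × Q2) (Q2 × Q2) ℂ :=
  (pauli μ ⊗ₖ pauli ν) ⊗ₖ (pauli κ ⊗ₖ pauli ξ)

/-- The OCB-allowed support types
`{∅, A₁, B₁, A₁B₁, A₂B₁, A₁B₂, A₁A₂B₁, A₁B₁B₂}`, encoded as quadruples of Booleans
recording on which of `A₁, A₂, B₁, B₂` a Pauli string acts nontrivially. -/
def ocbAllowedSupports : Set (Bool × Bool × Bool × Bool) :=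
  {(false, false, false, false), (true, false, false, false),
   (false, false, true, false), (true, false, true, false),
   (false, true, true, false), (true, false, false, true),
   (true, true, true, false), (true, false, true, true)}

/-- A Pauli string is OCB-allowed when its support type is in the allowed list. -/
def allowedOCB (μ ν κ ξ : Fin 4) : Prop :=
  (decide (μ ≠ 0), decide (ν ≠ 0), decide (κ ≠ 0), decide (ξ ≠ 0)) ∈ ocbAllowedSupports

/-- The span of the OCB-allowed four-qubit Pauli strings. -/
def ocbSpan : Submodule ℂ (Matrix (Q2 × Q2) (Q2 × Q2) ℂ) :=
  Submodule.span ℂ {m | ∃ μ ν κ ξ, allowedOCB μ ν κ ξ ∧ m = pauli4 μ ν κ ξ}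


section Helpers
open Matrix

lemma kron_conjT {l m n p : Type*} (A : Matrix l m ℂ) (B : Matrix n p ℂ) :
    (A ⊗ₖ B)ᴴ = Aᴴ ⊗ₖ Bᴴ := by
  ext ⟨i, k⟩ ⟨j, l⟩
  simp [conjTranspose_apply, kroneckerMap_apply, mul_comm]

lemma conjM_kron {l m n p : Type*} (A : Matrix l m ℂ) (B : Matrix n p ℂ) :
    conjM (A ⊗ₖ B) = conjM A ⊗ₖ conjM B := by
  ext ⟨i, k⟩ ⟨j, l⟩
  simp [conjM, kroneckerMap_apply]

lemma pauli_herm (a : Fin 4) : (pauli a)ᴴ = pauli a := by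
  fin_cases a <;>
    · ext i j
      fin_cases i <;> fin_cases j <;>
        simp [pauli, σx, σy, σz, conjTranspose_apply, Matrix.one_apply]

lemma pauli_mul_self (a : Fin 4) : pauli a * pauli a = 1 := by
  fin_cases a <;>
    simp [pauli, σx, σy, σz, Matrix.mul_fin_two, Matrix.one_fin_two] <;> norm_num [Complex.I_mul_I]

lemma trace_pauli_mul (a b : Fin 4) :
    (pauli a * pauli b).trace = if a = b then 2 else 0 := by
  fin_cases a <;> fin_cases b <;>
    simp [pauli, σx, σy, σz, Matrix.mul_fin_two, Matrix.one_fin_two, Matrix.trace_fin_two] <;>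
    norm_num [Complex.I_mul_I]

lemma trace_pauli_ne (a : Fin 4) (h : a ≠ 0) : (pauli a).trace = 0 := by
  fin_cases a <;> simp_all [pauli, σx, σy, σz, Matrix.trace_fin_two]

end Helpers

section Helpers2
open Matrix

lemma conjM_one {m : Type*} [DecidableEq m] : conjM (1 : Matrix m m ℂ) = 1 := by
  ext i j; simp only [conjM, Matrix.map_apply, Matrix.one_apply]; split <;> simp

lemma conjM_sx : conjM σx = σx := by
  ext i j; fin_cases i <;> fin_cases j <;> simp [conjM, σx]

lemma conjM_sz : conjM σz = σz := by
  ext i j; fin_cases i <;> fin_cases j <;> simp [conjM, σz]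

lemma conjM_sy : conjM σy = -σy := by
  ext i j; fin_cases i <;> fin_cases j <;> simp [conjM, σy]

lemma conjM_add {m n : Type*} (A B : Matrix m n ℂ) : conjM (A + B) = conjM A + conjM B := by
  ext i j; simp [conjM]

lemma conjM_rsmul {m n : Type*} (r : ℝ) (A : Matrix m n ℂ) : conjM (r • A) = r • conjM A := by
  ext i j; simp [conjM, Complex.real_smul]

lemma ptr2_kron (A B : Matrix (Fin 2) (Fin 2) ℂ) :
    ptr2 (A ⊗ₖ B) = B.trace • A := by
  ext i j
  simp [ptr2, kroneckerMap_apply, Matrix.trace, Matrix.diag, Finset.sum_mul, mul_comm]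
  ring

lemma ptr2_add (A B : Matrix Q2 Q2 ℂ) : ptr2 (A + B) = ptr2 A + ptr2 B := by
  ext i j; simp [ptr2, Finset.sum_add_distrib]

lemma ptr2_rsmul (r : ℝ) (A : Matrix Q2 Q2 ℂ) : ptr2 (r • A) = r • ptr2 A := by
  ext i j; simp [ptr2, Finset.smul_sum]

lemma real_smul_eq {m n : Type*} (r : ℝ) (A : Matrix m n ℂ) : r • A = (r : ℂ) • A := by
  ext i j; simp [Complex.real_smul]

end Helpers2

section Gdefs
open Matrix

def gen10 : Fin 10 → Fin 4 × Fin 4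
  | 0 => (0,0) | 1 => (1,0) | 2 => (3,0) | 3 => (0,1) | 4 => (0,3)
  | 5 => (1,1) | 6 => (1,3) | 7 => (3,1) | 8 => (3,3) | 9 => (2,2)

def G (i : Fin 10) : Matrix Q2 Q2 ℂ := pauli (gen10 i).1 ⊗ₖ pauli (gen10 i).2

def GG (p : Fin 10 × Fin 10) : Matrix (Q2 × Q2) (Q2 × Q2) ℂ := G p.1 ⊗ₖ G p.2

lemma G_mem_gen (i : Fin 10) : G i ∈ hermRGen := by
  fin_cases i <;>
    simp [G, gen10, hermRGen, pauli, Set.mem_insert_iff]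

lemma gen_sub_rangeG : hermRGen ⊆ Set.range G := by
  intro x hx
  simp only [hermRGen, Set.mem_insert_iff, Set.mem_singleton_iff] at hx
  rcases hx with rfl|rfl|rfl|rfl|rfl|rfl|rfl|rfl|rfl|rfl
  · exact ⟨0, by simp [G, gen10, pauli]⟩
  · exact ⟨1, by simp [G, gen10, pauli]⟩
  · exact ⟨2, by simp [G, gen10, pauli]⟩
  · exact ⟨3, by simp [G, gen10, pauli]⟩
  · exact ⟨4, by simp [G, gen10, pauli]⟩
  · exact ⟨5, by simp [G, gen10, pauli]⟩
  · exact ⟨6, by simp [G, gen10, pauli]⟩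
  · exact ⟨7, by simp [G, gen10, pauli]⟩
  · exact ⟨8, by simp [G, gen10, pauli]⟩
  · exact ⟨9, by simp [G, gen10, pauli]⟩

lemma gen10_inj : Function.Injective gen10 := by decide

lemma trace_G_mul (i j : Fin 10) : (G i * G j).trace = if i = j then 4 else 0 := by
  rw [G, G, ← mul_kronecker_mul, trace_kronecker, trace_pauli_mul, trace_pauli_mul]
  rcases eq_or_ne i j with rfl | h
  · norm_num
  · have : gen10 i ≠ gen10 j := fun hc => h (gen10_inj hc)
    rw [if_neg h]
    rcases eq_or_ne (gen10 i).1 (gen10 j).1 with h1 | h1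
    · have h2 : (gen10 i).2 ≠ (gen10 j).2 := fun hc => this (Prod.ext h1 hc)
      simp [h2]
    · simp [h1]

lemma trace_GG_mul (p q : Fin 10 × Fin 10) :
    (GG p * GG q).trace = if p = q then 16 else 0 := by
  rw [GG, GG, ← mul_kronecker_mul, trace_kronecker, trace_G_mul, trace_G_mul]
  rcases eq_or_ne p q with rfl | h
  · norm_num
  · rw [if_neg h]
    rcases eq_or_ne p.1 q.1 with h1 | h1
    · have h2 : p.2 ≠ q.2 := fun hc => h (Prod.ext h1 hc)
      simp [h2]
    · simp [h1]

lemma G_herm (i : Fin 10) : (G i)ᴴ = G i := by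
  rw [G, kron_conjT, pauli_herm, pauli_herm]

lemma G_mul_self (i : Fin 10) : G i * G i = 1 := by
  rw [G, ← mul_kronecker_mul, pauli_mul_self, pauli_mul_self, one_kronecker_one]

lemma kron_neg_neg {l m n p : Type*} (A : Matrix l m ℂ) (B : Matrix n p ℂ) :
    (-A) ⊗ₖ (-B) = A ⊗ₖ B := by
  ext ⟨i, k⟩ ⟨j, l⟩; simp [kroneckerMap_apply]

lemma conjM_G (i : Fin 10) : conjM (G i) = G i := by
  fin_cases i <;>
    simp [G, gen10, pauli, conjM_kron, conjM_one, conjM_sx, conjM_sy, conjM_sz, kron_neg_neg]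

lemma G_zero : G 0 = 1 := by
  simp [G, gen10, pauli, one_kronecker_one]

lemma ptr2_G (i : Fin 10) (h : (3:Fin 10) ≤ i) : ptr2 (G i) = 0 := by
  rw [G, ptr2_kron]
  have : (gen10 i).2 ≠ 0 := by revert h; revert i; decide
  rw [trace_pauli_ne _ this, zero_smul]

end Gdefs

section Spans
open Matrix Submodule

lemma hermR_conjT : ∀ a ∈ HermR, aᴴ = a := by
  intro a ha
  induction ha using Submodule.span_induction with
  | mem x hx => obtain ⟨i, rfl⟩ := gen_sub_rangeG hx; exact G_herm i
  | zero => simp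
  | add x y hx hy ihx ihy => rw [conjTranspose_add, ihx, ihy]
  | smul r x hx ih => rw [conjTranspose_smul, ih, star_trivial]

lemma kronSpan_conjT : ∀ s ∈ kronSpan (HermR : Set (Matrix Q2 Q2 ℂ)) HermR, sᴴ = s := by
  intro s hs
  induction hs using Submodule.span_induction with
  | mem x hx =>
      obtain ⟨a, ha, b, hb, rfl⟩ := hx
      rw [kron_conjT, hermR_conjT a ha, hermR_conjT b hb]
  | zero => simp
  | add x y hx hy ihx ihy => rw [conjTranspose_add, ihx, ihy]
  | smul r x hx ih => rw [conjTranspose_smul, ih, star_trivial]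

lemma hermR_le : HermR ≤ Submodule.span ℝ (Set.range G) :=
  Submodule.span_le.mpr fun x hx => Submodule.subset_span (gen_sub_rangeG hx)

lemma kron_mem_spanGG {a b : Matrix Q2 Q2 ℂ}
    (ha : a ∈ Submodule.span ℝ (Set.range G)) (hb : b ∈ Submodule.span ℝ (Set.range G)) :
    a ⊗ₖ b ∈ Submodule.span ℝ (Set.range GG) := by
  induction ha, hb using Submodule.span_induction₂ with
  | mem_mem x y hx hy =>
      obtain ⟨i, rfl⟩ := hx; obtain ⟨j, rfl⟩ := hy
      exact Submodule.subset_span ⟨(i, j), rfl⟩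
  | zero_left y hy => rw [zero_kronecker]; exact Submodule.zero_mem _
  | zero_right x hx => rw [kronecker_zero]; exact Submodule.zero_mem _
  | add_left x y z hx hy hz ih1 ih2 => rw [add_kronecker]; exact Submodule.add_mem _ ih1 ih2
  | add_right x y z hx hy hz ih1 ih2 => rw [kronecker_add]; exact Submodule.add_mem _ ih1 ih2
  | smul_left r x y hx hy ih => rw [smul_kronecker]; exact Submodule.smul_mem _ _ ih
  | smul_right r x y hx hy ih => rw [kronecker_smul]; exact Submodule.smul_mem _ _ ih

lemma kronSpan_le :
    kronSpan (HermR : Set (Matrix Q2 Q2 ℂ)) HermR ≤ Submodule.span ℝ (Set.range GG) := by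
  rw [kronSpan, Submodule.span_le]
  rintro x ⟨a, ha, b, hb, rfl⟩
  exact kron_mem_spanGG (hermR_le ha) (hermR_le hb)

lemma decomp : ∀ x ∈ Submodule.span ℝ (Set.range GG),
    x = ∑ p : Fin 10 × Fin 10, (((x * GG p).trace) / 16) • GG p := by
  intro x hx
  induction hx using Submodule.span_induction with
  | mem m hm =>
      obtain ⟨q, rfl⟩ := hm
      have h : ∀ p : Fin 10 × Fin 10,
          (((GG q * GG p).trace) / 16) • GG p = if q = p then GG p else 0 := by
        intro p
        rw [trace_GG_mul]
        split_ifs with h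
        · norm_num
        · simp
      rw [Finset.sum_congr rfl fun p _ => h p, Finset.sum_ite_eq]
      simp
  | zero => simp
  | add x y hx hy ihx ihy =>
      have h : ∀ p : Fin 10 × Fin 10,
          ((((x + y) * GG p).trace) / 16) • GG p
            = (((x * GG p).trace) / 16) • GG p + (((y * GG p).trace) / 16) • GG p := by
        intro p
        rw [add_mul, trace_add, add_div, add_smul]
      rw [Finset.sum_congr rfl fun p _ => h p, Finset.sum_add_distrib]
      exact congrArg₂ (· + ·) ihx ihy
  | smul r x hx ih =>
      have h : ∀ p : Fin 10 × Fin 10,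
          (((r • x * GG p).trace) / 16) • GG p = r • ((((x * GG p).trace) / 16) • GG p) := by
        intro p
        rw [smul_mul_assoc, trace_smul]
        rw [show (r • (x * GG p).trace / 16) = r • ((x * GG p).trace / 16) by
          simp [Complex.real_smul, mul_div_assoc]]
        rw [smul_assoc]
      rw [Finset.sum_congr rfl fun p _ => h p, ← Finset.smul_sum, ← ih]

end Spans

section BadGood

def Badp (p : Fin 10 × Fin 10) : Prop :=
  ((3:Fin 10) ≤ p.1 ∧ (3:Fin 10) ≤ p.2) ∨ ((3:Fin 10) ≤ p.1 ∧ p.2 = 0) ∨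
    (p.1 = 0 ∧ (3:Fin 10) ≤ p.2)

instance : DecidablePred Badp := fun p => by unfold Badp; infer_instance

def allowedB (μ ν κ ξ : Fin 4) : Prop :=
  (decide (μ ≠ 0), decide (ν ≠ 0), decide (κ ≠ 0), decide (ξ ≠ 0)) = (false, false, false, false) ∨
  (decide (μ ≠ 0), decide (ν ≠ 0), decide (κ ≠ 0), decide (ξ ≠ 0)) = (true, false, false, false) ∨
  (decide (μ ≠ 0), decide (ν ≠ 0), decide (κ ≠ 0), decide (ξ ≠ 0)) = (false, false, true, false) ∨
  (decide (μ ≠ 0), decide (ν ≠ 0), decide (κ ≠ 0), decide (ξ ≠ 0)) = (true, false, true, false) ∨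
  (decide (μ ≠ 0), decide (ν ≠ 0), decide (κ ≠ 0), decide (ξ ≠ 0)) = (false, true, true, false) ∨
  (decide (μ ≠ 0), decide (ν ≠ 0), decide (κ ≠ 0), decide (ξ ≠ 0)) = (true, false, false, true) ∨
  (decide (μ ≠ 0), decide (ν ≠ 0), decide (κ ≠ 0), decide (ξ ≠ 0)) = (true, true, true, false) ∨
  (decide (μ ≠ 0), decide (ν ≠ 0), decide (κ ≠ 0), decide (ξ ≠ 0)) = (true, false, true, true)

instance allowedB.dec : ∀ μ ν κ ξ : Fin 4, Decidable (allowedB μ ν κ ξ) := fun _ _ _ _ => by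
  unfold allowedB; infer_instance

lemma allowedB_imp {μ ν κ ξ : Fin 4} (h : allowedB μ ν κ ξ) : allowedOCB μ ν κ ξ := by
  unfold allowedOCB ocbAllowedSupports
  rcases h with h|h|h|h|h|h|h|h <;> rw [h] <;>
    simp [Set.mem_insert_iff, Set.mem_singleton_iff]

lemma good_allowedB : ∀ p : Fin 10 × Fin 10, ¬ Badp p →
    allowedB (gen10 p.1).1 (gen10 p.1).2 (gen10 p.2).1 (gen10 p.2).2 := by decide

lemma good_allowed (p : Fin 10 × Fin 10) (hp : ¬ Badp p) :
    allowedOCB (gen10 p.1).1 (gen10 p.1).2 (gen10 p.2).1 (gen10 p.2).2 :=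
  allowedB_imp (good_allowedB p hp)

lemma GG_mem_ocb (p : Fin 10 × Fin 10) (hp : ¬ Badp p) : GG p ∈ ocbSpan :=
  Submodule.subset_span
    ⟨(gen10 p.1).1, (gen10 p.1).2, (gen10 p.2).1, (gen10 p.2).2, good_allowed p hp, rfl⟩

end BadGood

section Choi
open Matrix

def Mch (T : Matrix Q2 Q2 ℂ) (s : ℝ) : Matrix Q2 Q2 ℂ :=
  (1/2 : ℝ) • (1 : Matrix Q2 Q2 ℂ) + (s/2 : ℝ) • T

lemma ptr2_one : ptr2 (1 : Matrix Q2 Q2 ℂ) = (2:ℂ) • 1 := by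
  ext i j
  by_cases h : i = j <;>
    simp [ptr2, Matrix.one_apply, Prod.ext_iff, h]

lemma Mch_eq (T : Matrix Q2 Q2 ℂ) (s : ℝ) :
    Mch T s = ((1:ℝ)/2 : ℂ) • ((1 : Matrix Q2 Q2 ℂ) + ((s:ℂ)) • T) := by
  rw [Mch, real_smul_eq, real_smul_eq, smul_add, smul_smul]
  push_cast
  ring_nf

lemma choi_Mch (T : Matrix Q2 Q2 ℂ) (hr : conjM T = T) (hh : Tᴴ = T) (hm : T * T = 1)
    (hp : ptr2 T = 0) (s : ℝ) (hs : s * s = 1) : IsRealCPTPChoi (Mch T s) := by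
  refine ⟨?_, ?_, ?_⟩
  · unfold Mch
    rw [conjM_add, conjM_rsmul, conjM_rsmul, conjM_one, hr]
  · have hAh : (Mch T s)ᴴ = Mch T s := by
      rw [Mch_eq, conjTranspose_smul, conjTranspose_add, conjTranspose_one,
        conjTranspose_smul, hh]
      norm_num [Complex.conj_ofReal]
    have key : (Mch T s)ᴴ * (Mch T s) = Mch T s := by
      rw [hAh, Mch_eq, smul_mul_smul_comm]
      have expand : ((1 : Matrix Q2 Q2 ℂ) + ((s:ℂ)) • T) * ((1 : Matrix Q2 Q2 ℂ) + ((s:ℂ)) • T)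
          = (2:ℂ) • (1 : Matrix Q2 Q2 ℂ) + ((2*s:ℝ) : ℂ) • T := by
        rw [add_mul, mul_add, mul_add, one_mul, mul_one, smul_mul_smul_comm, hm]
        rw [show ((s:ℂ)) * ((s:ℂ)) = 1 by
          rw [← Complex.ofReal_mul, hs, Complex.ofReal_one]]
        push_cast
        simp only [one_mul, one_smul]
        module
      rw [expand]
      push_cast
      module
    rw [← key]
    exact posSemidef_conjTranspose_mul_self _
  · unfold Mch
    rw [ptr2_add, ptr2_rsmul, ptr2_rsmul, ptr2_one, hp, smul_zero, add_zero,
      real_smul_eq, smul_smul]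
    norm_num

lemma Mch_mem_HermR (i : Fin 10) (s : ℝ) : Mch (G i) s ∈ HermR := by
  unfold Mch
  refine Submodule.add_mem _ (Submodule.smul_mem _ _ ?_) (Submodule.smul_mem _ _ ?_)
  · have : (1 : Matrix Q2 Q2 ℂ) = G 0 := G_zero.symm
    rw [this]
    exact Submodule.subset_span (G_mem_gen 0)
  · exact Submodule.subset_span (G_mem_gen i)

end Choi

section Main
open Matrix

lemma kron_expand (i j : Fin 10) (s t : ℝ) :
    Mch (G i) s ⊗ₖ Mch (G j) t
      = ((1:ℂ)/4) • ((1 : Matrix (Q2 × Q2) (Q2 × Q2) ℂ)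
          + (s:ℂ) • (G i ⊗ₖ (1 : Matrix Q2 Q2 ℂ))
          + (t:ℂ) • ((1 : Matrix Q2 Q2 ℂ) ⊗ₖ G j)
          + ((s:ℂ) * (t:ℂ)) • (G i ⊗ₖ G j)) := by
  rw [Mch_eq, Mch_eq, smul_kronecker, kronecker_smul, smul_smul]
  rw [add_kronecker, kronecker_add, kronecker_add, one_kronecker_one,
    smul_kronecker, kronecker_smul, kronecker_smul, smul_kronecker, smul_smul]
  push_cast
  module

/-- For a bipartite qubit RQT process matrix `W`, the orthogonal
projection `W'` of `W` onto `Herm_ℝ^{A₁A₂} ⊗ Herm_ℝ^{B₁B₂}` (with respect to the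
real Hilbert–Schmidt inner product) reproduces all locally accessible statistics of
`W`, and its Pauli expansion is supported only on the OCB-allowed support types; in
particular every OCB-forbidden Pauli component of `W` is invisible to local real
tomography. -/
theorem rqt_forbidden_terms_invisible
    (W : Matrix (Q2 × Q2) (Q2 × Q2) ℂ)
    (hWreal : conjM W = W)
    (hWpsd : W.PosSemidef)
    (hWnorm : ∀ MA MB : Matrix Q2 Q2 ℂ, IsRealCPTPChoi MA → IsRealCPTPChoi MB →
      (W * (MA ⊗ₖ MB)).trace = 1)
    -- `W'` is the orthogonal projection of `W` onto the locally accessible subspace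
    (W' : Matrix (Q2 × Q2) (Q2 × Q2) ℂ)
    (hW'mem : W' ∈ kronSpan (HermR : Set (Matrix Q2 Q2 ℂ)) (HermR : Set (Matrix Q2 Q2 ℂ)))
    (hW'orth : ∀ s ∈ kronSpan (HermR : Set (Matrix Q2 Q2 ℂ)) (HermR : Set (Matrix Q2 Q2 ℂ)),
      (((W - W')ᴴ * s).trace).re = 0) :
    (∀ MA ∈ HermR, ∀ MB ∈ HermR,
      (W * (MA ⊗ₖ MB)).trace = (W' * (MA ⊗ₖ MB)).trace) ∧
    W' ∈ ocbSpan := by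
  have hW'h : W'ᴴ = W' := kronSpan_conjT W' hW'mem
  have hWh : Wᴴ = W := hWpsd.1
  have part1 : ∀ MA ∈ HermR, ∀ MB ∈ HermR,
      (W * (MA ⊗ₖ MB)).trace = (W' * (MA ⊗ₖ MB)).trace := by
    intro MA hMA MB hMB
    have hs : (MA ⊗ₖ MB) ∈ kronSpan (HermR : Set (Matrix Q2 Q2 ℂ)) HermR :=
      Submodule.subset_span ⟨MA, hMA, MB, hMB, rfl⟩
    have hd : (W - W')ᴴ = W - W' := by rw [conjTranspose_sub, hWh, hW'h]
    have hre : (((W - W') * (MA ⊗ₖ MB)).trace).re = 0 := by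
      have h := hW'orth _ hs; rwa [hd] at h
    have hsym : (MA ⊗ₖ MB)ᴴ = MA ⊗ₖ MB := by
      rw [kron_conjT, hermR_conjT MA hMA, hermR_conjT MB hMB]
    have hstar : star (((W - W') * (MA ⊗ₖ MB)).trace) = ((W - W') * (MA ⊗ₖ MB)).trace := by
      rw [← trace_conjTranspose, conjTranspose_mul, hd, hsym, trace_mul_comm]
    have him : (((W - W') * (MA ⊗ₖ MB)).trace).im = 0 := by
      have h := congrArg Complex.im hstar
      simp only [Complex.star_def, Complex.conj_im] at h
      linarith
    have ht0 : ((W - W') * (MA ⊗ₖ MB)).trace = 0 := by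
      apply Complex.ext <;> simp [hre, him]
    have h2 : (W * (MA ⊗ₖ MB)).trace - (W' * (MA ⊗ₖ MB)).trace = 0 := by
      rw [← trace_sub, ← Matrix.sub_mul]; exact ht0
    exact sub_eq_zero.mp h2
  refine ⟨part1, ?_⟩
  have key4 : ∀ i j : Fin 10, (3:Fin 10) ≤ i → (3:Fin 10) ≤ j → ∀ s t : ℝ, s*s=1 → t*t=1 →
      (W' * (Mch (G i) s ⊗ₖ Mch (G j) t)).trace = 1 := by
    intro i j hi hj s t hs ht
    rw [← part1 _ (Mch_mem_HermR i s) _ (Mch_mem_HermR j t)]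
    exact hWnorm _ _
      (choi_Mch _ (conjM_G i) (G_herm i) (G_mul_self i) (ptr2_G i hi) s hs)
      (choi_Mch _ (conjM_G j) (G_herm j) (G_mul_self j) (ptr2_G j hj) t ht)
  have main : ∀ i j : Fin 10, (3:Fin 10) ≤ i → (3:Fin 10) ≤ j →
      (W' * (G i ⊗ₖ G j)).trace = 0 ∧
      (W' * (G i ⊗ₖ (1 : Matrix Q2 Q2 ℂ))).trace = 0 ∧
      (W' * ((1 : Matrix Q2 Q2 ℂ) ⊗ₖ G j)).trace = 0 := by
    intro i j hi hj
    have e : ∀ s t : ℝ, s*s=1 → t*t=1 →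
        ((1:ℂ)/4) * ((W' * (1 : Matrix (Q2 × Q2) (Q2 × Q2) ℂ)).trace
          + (s:ℂ) * (W' * (G i ⊗ₖ (1 : Matrix Q2 Q2 ℂ))).trace
          + (t:ℂ) * (W' * ((1 : Matrix Q2 Q2 ℂ) ⊗ₖ G j)).trace
          + ((s:ℂ) * (t:ℂ)) * (W' * (G i ⊗ₖ G j)).trace) = 1 := by
      intro s t hs ht
      have h := key4 i j hi hj s t hs ht
      rw [kron_expand i j s t, mul_smul_comm, trace_smul, Matrix.mul_add, Matrix.mul_add,
        Matrix.mul_add, trace_add, trace_add, trace_add, mul_smul_comm, mul_smul_comm,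
        mul_smul_comm, trace_smul, trace_smul, trace_smul, smul_eq_mul] at h
      simpa [smul_eq_mul, mul_add] using h
    have e11 := e 1 1 (by norm_num) (by norm_num)
    have e1m := e 1 (-1) (by norm_num) (by norm_num)
    have em1 := e (-1) 1 (by norm_num) (by norm_num)
    have emm := e (-1) (-1) (by norm_num) (by norm_num)
    push_cast at e11 e1m em1 emm
    refine ⟨?_, ?_, ?_⟩
    · linear_combination e11 - e1m - em1 + emm
    · linear_combination e11 + e1m - em1 - emm
    · linear_combination e11 - e1m + em1 - emm
  have htrace0 : ∀ p : Fin 10 × Fin 10, Badp p → (W' * GG p).trace = 0 := by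
    rintro ⟨i, j⟩ (⟨h1, h2⟩ | ⟨h1, h2⟩ | ⟨h1, h2⟩)
    · exact (main i j h1 h2).1
    · have h := (main i 3 h1 (by norm_num)).2.1
      show (W' * (G i ⊗ₖ G j)).trace = 0
      rw [show j = 0 from h2, G_zero]; exact h
    · have h := (main 3 j (by norm_num) h2).2.2
      show (W' * (G i ⊗ₖ G j)).trace = 0
      rw [show i = 0 from h1, G_zero]; exact h
  have hWd := decomp W' (kronSpan_le hW'mem)
  rw [hWd]
  refine Submodule.sum_mem _ fun p _ => ?_
  by_cases hb : Badp p
  · rw [htrace0 p hb]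
    simp
  · exact Submodule.smul_mem _ _ (GG_mem_ocb p hb)
end Main
end
end

section
/- With the notation of the encoding/decoding construction (G finite, X̂_1 := X_1⊗ℂ^{|G|}, X̂_2 := X_2⊗ℂ^{|G|}, regular representation L_h on the registers, D_X(M̂) := (1/|G|) Σ_{g∈G} Tr_{R_{X_2}}[(⟨g|_{R_{X_1}}⊗I) M̂ (|g⟩_{R_{X_1}}⊗I)]): (i) D_X is completely positive, and if M̂ is a CPTP Choi operator on X̂_1X̂_2 then D_X(M̂) is a CPTP Choi operator on X_1X_2; (ii) D_X ∘ Ûᶜ_h = D_X for all h ∈ G, where Ûᶜ_h denotes conjugation by the induced Choi-space action V̂_h := (I⊗L_h)⊗conj(I⊗L_h); consequently the Hilbert–Schmidt adjoint D_X† is completely positive and its image consists of globally invariant operators (V̂_h D_X†(Y) V̂_h† = D_X†(Y) for all h and all Y). -/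
open Matrix BigOperators
open scoped Kronecker ComplexOrder

noncomputable section

/-- CPTP Choi matrix: positive semidefinite with partial trace over the output equal
to the identity on the input. -/
def IsCPTPChoi {a b : Type} [Fintype a] [Fintype b] [DecidableEq a]
    (M : Matrix (a × b) (a × b) ℂ) : Prop :=
  M.PosSemidef ∧ ptr2 M = 1

variable {G : Type} [Group G] [Fintype G] [DecidableEq G]

/-- The left regular representation `L_h |g⟩ = |hg⟩` of a finite group on `ℂ^{|G|}`. -/
def regRep (h : G) : Matrix G G ℂ := fun a b => if a = h * b then 1 else 0

variable {X1 X2 : Type} [Fintype X1] [DecidableEq X1] [Fintype X2] [DecidableEq X2]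

/-- The encoding map `Γ_X(M) = Σ_g |g⟩⟨g|_{R_{X₁}} ⊗ |g⟩⟨g|_{R_{X₂}} ⊗ M`
(after the canonical reordering of tensor factors), as a Choi operator on the
enlarged pair `X̂₁ = X₁ ⊗ ℂ^{|G|}`, `X̂₂ = X₂ ⊗ ℂ^{|G|}`. -/
def Γenc (M : Matrix (X1 × X2) (X1 × X2) ℂ) :
    Matrix ((X1 × G) × (X2 × G)) ((X1 × G) × (X2 × G)) ℂ :=
  fun p q =>
    if p.1.2 = q.1.2 ∧ p.2.2 = q.2.2 ∧ p.1.2 = p.2.2 then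
      M (p.1.1, p.2.1) (q.1.1, q.2.1)
    else 0

/-- The decoding map
`D_X(M̂) = (1/|G|) Σ_g Tr_{R_{X₂}}[(⟨g|_{R_{X₁}} ⊗ I) M̂ (|g⟩_{R_{X₁}} ⊗ I)]`. -/
def Ddec (M : Matrix ((X1 × G) × (X2 × G)) ((X1 × G) × (X2 × G)) ℂ) :
    Matrix (X1 × X2) (X1 × X2) ℂ :=
  fun p q =>
    ((Fintype.card G : ℂ))⁻¹ *
      ∑ g : G, ∑ r : G, M ((p.1, g), (p.2, r)) ((q.1, g), (q.2, r))

/-- The induced Choi-space action `V̂_h = (I_{X₁}⊗L_h) ⊗ conj(I_{X₂}⊗L_h)` on the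
enlarged pair. -/
def Vhat (h : G) : Matrix ((X1 × G) × (X2 × G)) ((X1 × G) × (X2 × G)) ℂ :=
  ((1 : Matrix X1 X1 ℂ) ⊗ₖ regRep h) ⊗ₖ conjM ((1 : Matrix X2 X2 ℂ) ⊗ₖ regRep h)


/-- Ampliation `Φ ⊗ id_E` of a map on matrices, acting blockwise on an ancilla
factor `E`. -/
def ampl {c₁ c₂ E : Type} (Φ : Matrix c₁ c₁ ℂ → Matrix c₂ c₂ ℂ)
    (M : Matrix (c₁ × E) (c₁ × E) ℂ) : Matrix (c₂ × E) (c₂ × E) ℂ :=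
  fun p q => Φ (fun i j => M (i, p.2) (j, q.2)) p.1 q.1

/-- Complete positivity: every ampliation by a finite-dimensional ancilla preserves
positive semidefiniteness. -/
def IsCompletelyPositive {c₁ c₂ : Type} [Fintype c₁] [Fintype c₂]
    (Φ : Matrix c₁ c₁ ℂ → Matrix c₂ c₂ ℂ) : Prop :=
  ∀ (dE : ℕ) (M : Matrix (c₁ × Fin dE) (c₁ × Fin dE) ℂ),
    M.PosSemidef → (ampl Φ M).PosSemidef

section AuxLemmas

set_option linter.unusedSectionVars false

variable {G : Type} [Group G] [Fintype G] [DecidableEq G]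
variable {X1 X2 : Type} [Fintype X1] [DecidableEq X1] [Fintype X2] [DecidableEq X2]

lemma psd_smul' {n : Type} [Fintype n] {c : ℝ} (hc : 0 ≤ c) {M : Matrix n n ℂ}
    (hM : M.PosSemidef) : ((c : ℂ) • M).PosSemidef := by
  constructor
  · unfold Matrix.IsHermitian
    rw [Matrix.conjTranspose_smul, hM.1.eq]
    congr 1
    simp
  · intro x
    exact (hM.smul (by exact_mod_cast hc : (0:ℂ) ≤ (c:ℂ))).2 x

lemma psd_sum' {n ι : Type} [Fintype n] (s : Finset ι) (f : ι → Matrix n n ℂ)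
    (h : ∀ i ∈ s, (f i).PosSemidef) : (∑ i ∈ s, f i).PosSemidef := by
  classical
  induction s using Finset.induction_on with
  | empty => simpa using Matrix.PosSemidef.zero
  | insert _ _ hnot ih =>
    rw [Finset.sum_insert hnot]
    exact ((h _ (Finset.mem_insert_self _ _)).add
      (ih fun i hi => h i (Finset.mem_insert_of_mem hi)))

lemma cardinv_eq : ((Fintype.card G : ℂ))⁻¹ = (((Fintype.card G : ℝ)⁻¹ : ℝ) : ℂ) := by
  push_cast
  rfl

lemma Vhat_apply (h : G) (u v : (X1 × G) × (X2 × G)) :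
    Vhat h u v = if v = ((u.1.1, h⁻¹ * u.1.2), (u.2.1, h⁻¹ * u.2.2)) then 1 else 0 := by
  obtain ⟨⟨a, g⟩, b, r⟩ := u
  obtain ⟨⟨a', g'⟩, b', r'⟩ := v
  simp only [Vhat, Matrix.kroneckerMap_apply, conjM, Matrix.map_apply, regRep,
    Matrix.one_apply, Prod.ext_iff]
  split_ifs <;> simp_all

lemma Vhat_conj_apply (h : G) (M : Matrix ((X1 × G) × (X2 × G)) ((X1 × G) × (X2 × G)) ℂ)
    (u v : (X1 × G) × (X2 × G)) :
    (Vhat h * M * (Vhat h)ᴴ : Matrix ((X1 × G) × (X2 × G)) ((X1 × G) × (X2 × G)) ℂ) u v =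
      M ((u.1.1, h⁻¹ * u.1.2), (u.2.1, h⁻¹ * u.2.2))
        ((v.1.1, h⁻¹ * v.1.2), (v.2.1, h⁻¹ * v.2.2)) := by
  simp [Matrix.mul_apply, Vhat_apply, Matrix.conjTranspose_apply, apply_ite,
    Finset.sum_ite_eq, Finset.sum_ite_eq', ite_mul, mul_ite]

lemma Ddec_absorb (h : G) (M : Matrix ((X1 × G) × (X2 × G)) ((X1 × G) × (X2 × G)) ℂ) :
    Ddec (Vhat h * M * (Vhat h)ᴴ) = Ddec M := by
  ext p q
  simp only [Ddec]
  congr 1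
  refine Fintype.sum_equiv (Equiv.mulLeft h⁻¹) _ _ fun g => ?_
  refine Fintype.sum_equiv (Equiv.mulLeft h⁻¹) _ _ fun r => ?_
  simp [Vhat_conj_apply]

/-- Kraus operator with ancilla. -/
def WK (E : Type) [DecidableEq E] (gr : G × G) :
    Matrix (((X1 × G) × (X2 × G)) × E) ((X1 × X2) × E) ℂ :=
  fun s p => if s = (((p.1.1, gr.1), (p.1.2, gr.2)), p.2) then 1 else 0

lemma WK_apply' (E : Type) [DecidableEq E] (gr : G × G) (s : ((X1 × G) × (X2 × G)) × E)
    (p : (X1 × X2) × E) :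
    WK E gr s p =
      if p = (((s.1.1.1, s.1.2.1), s.2)) ∧ s.1.1.2 = gr.1 ∧ s.1.2.2 = gr.2 then 1
      else 0 := by
  obtain ⟨⟨⟨a, g⟩, b, r⟩, e⟩ := s
  obtain ⟨⟨a', b'⟩, e'⟩ := p
  simp only [WK, Prod.ext_iff]
  split_ifs <;> simp_all

lemma ampl_Ddec_eq (E : Type) [Fintype E] [DecidableEq E]
    (M : Matrix ((((X1 × G) × (X2 × G)) × E)) ((((X1 × G) × (X2 × G)) × E)) ℂ) :
    ampl Ddec M =
      ((Fintype.card G : ℂ))⁻¹ • ∑ gr : G × G, (WK (X1 := X1) (X2 := X2) E gr)ᴴ * M * WK (X1 := X1) (X2 := X2) E gr := by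
  ext p q
  simp only [ampl, Ddec, Matrix.smul_apply, Matrix.sum_apply, Matrix.mul_apply,
    Matrix.conjTranspose_apply, WK, smul_eq_mul]
  rw [Fintype.sum_prod_type]
  congr 1
  refine Finset.sum_congr rfl fun g _ => ?_
  refine Finset.sum_congr rfl fun r _ => ?_
  simp [apply_ite, ite_mul, mul_ite, Finset.sum_ite_eq, Finset.sum_ite_eq']

/-- The explicit Hilbert–Schmidt adjoint of `Ddec`. -/
def Dadj (B : Matrix (X1 × X2) (X1 × X2) ℂ) :
    Matrix ((X1 × G) × (X2 × G)) ((X1 × G) × (X2 × G)) ℂ :=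
  fun u v =>
    ((Fintype.card G : ℂ))⁻¹ *
      (if u.1.2 = v.1.2 ∧ u.2.2 = v.2.2 then B (u.1.1, u.2.1) (v.1.1, v.2.1) else 0)

lemma ampl_Dadj_eq (E : Type) [Fintype E] [DecidableEq E]
    (M : Matrix ((X1 × X2) × E) ((X1 × X2) × E) ℂ) :
    ampl (Dadj (G := G)) M =
      ((Fintype.card G : ℂ))⁻¹ • ∑ gr : G × G, WK (X1 := X1) (X2 := X2) E gr * M * (WK (X1 := X1) (X2 := X2) E gr)ᴴ := by
  ext s t
  simp only [ampl, Dadj, Matrix.smul_apply, Matrix.sum_apply, Matrix.mul_apply,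
    Matrix.conjTranspose_apply, smul_eq_mul]
  congr 1
  rw [Fintype.sum_prod_type]
  simp only [WK_apply', apply_ite, _root_.map_one, _root_.map_zero, ite_mul, mul_ite,
    one_mul, zero_mul, mul_one, mul_zero, ite_and]
  simp [Finset.sum_ite_eq, Finset.sum_ite_eq', Fintype.sum_prod_type]

def wk (gr : G × G) : Matrix ((X1 × G) × (X2 × G)) (X1 × X2) ℂ :=
  fun s p => if s = ((p.1, gr.1), (p.2, gr.2)) then 1 else 0

lemma wk_apply' (gr : G × G) (s : (X1 × G) × (X2 × G)) (p : X1 × X2) :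
    wk gr s p =
      if p = (s.1.1, s.2.1) ∧ s.1.2 = gr.1 ∧ s.2.2 = gr.2 then 1 else 0 := by
  obtain ⟨⟨a, g⟩, b, r⟩ := s
  obtain ⟨a', b'⟩ := p
  simp only [wk, Prod.ext_iff]
  split_ifs <;> simp_all

lemma Ddec_eq (M : Matrix ((X1 × G) × (X2 × G)) ((X1 × G) × (X2 × G)) ℂ) :
    Ddec M = ((Fintype.card G : ℂ))⁻¹ • ∑ gr : G × G, (wk (X1 := X1) (X2 := X2) gr)ᴴ * M * wk (X1 := X1) (X2 := X2) gr := by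
  ext p q
  simp only [Ddec, Matrix.smul_apply, Matrix.sum_apply, Matrix.mul_apply,
    Matrix.conjTranspose_apply, wk, smul_eq_mul]
  rw [Fintype.sum_prod_type]
  congr 1
  refine Finset.sum_congr rfl fun g _ => ?_
  refine Finset.sum_congr rfl fun r _ => ?_
  simp [apply_ite, ite_mul, mul_ite, Finset.sum_ite_eq, Finset.sum_ite_eq']

lemma Dadj_eq (B : Matrix (X1 × X2) (X1 × X2) ℂ) :
    Dadj (G := G) B = ((Fintype.card G : ℂ))⁻¹ • ∑ gr : G × G, wk (X1 := X1) (X2 := X2) gr * B * (wk (X1 := X1) (X2 := X2) gr)ᴴ := by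
  ext s t
  simp only [Dadj, Matrix.smul_apply, Matrix.sum_apply, Matrix.mul_apply,
    Matrix.conjTranspose_apply, smul_eq_mul]
  congr 1
  rw [Fintype.sum_prod_type]
  simp only [wk_apply', apply_ite, _root_.map_one, _root_.map_zero, ite_mul, mul_ite,
    one_mul, zero_mul, mul_one, mul_zero, ite_and]
  simp [Finset.sum_ite_eq, Finset.sum_ite_eq', Fintype.sum_prod_type]

lemma ext_of_traces {n : Type} [Fintype n] [DecidableEq n] {C D : Matrix n n ℂ}
    (h : ∀ A : Matrix n n ℂ, (Aᴴ * C).trace = (Aᴴ * D).trace) : C = D := by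
  ext u v
  have := h (Matrix.single u v 1)
  simpa [Matrix.trace, Matrix.mul_apply, Matrix.single, Matrix.conjTranspose_apply,
    apply_ite, ite_and, Finset.sum_ite_eq, Finset.sum_ite_eq'] using this

lemma star_cardinv : star ((Fintype.card G : ℂ))⁻¹ = ((Fintype.card G : ℂ))⁻¹ := by
  simp

lemma trace_adj (A : Matrix ((X1 × G) × (X2 × G)) ((X1 × G) × (X2 × G)) ℂ)
    (B : Matrix (X1 × X2) (X1 × X2) ℂ) :
    ((Ddec A)ᴴ * B).trace = (Aᴴ * Dadj B).trace := by
  rw [Ddec_eq, Dadj_eq, Matrix.conjTranspose_smul, Matrix.smul_mul, Matrix.mul_smul,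
    Matrix.trace_smul, Matrix.trace_smul, star_cardinv]
  congr 1
  rw [Matrix.conjTranspose_sum, Matrix.sum_mul, Matrix.mul_sum, Matrix.trace_sum,
    Matrix.trace_sum]
  refine Finset.sum_congr rfl fun gr _ => ?_
  rw [Matrix.conjTranspose_mul, Matrix.conjTranspose_mul, Matrix.conjTranspose_conjTranspose]
  rw [Matrix.mul_assoc, Matrix.mul_assoc, Matrix.trace_mul_comm, Matrix.mul_assoc]

lemma Dadj_inv (h : G) (Y : Matrix (X1 × X2) (X1 × X2) ℂ) :
    Vhat h * Dadj Y * (Vhat h)ᴴ = Dadj Y := by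
  ext u v
  rw [Vhat_conj_apply]
  simp [Dadj]

lemma Ddec_tp (M : Matrix ((X1 × G) × (X2 × G)) ((X1 × G) × (X2 × G)) ℂ)
    (hM : ptr2 M = 1) : ptr2 (Ddec M) = 1 := by
  ext i j
  have key : ∀ g : G, ∑ zr : X2 × G, M ((i, g), zr) ((j, g), zr)
      = if i = j then 1 else 0 := by
    intro g
    have := congrFun (congrFun hM (i, g)) (j, g)
    simpa [ptr2, Matrix.one_apply, Prod.ext_iff] using this
  have expand : ∀ z : X2, ∀ g : G, ∑ r : G, M ((i, g), (z, r)) ((j, g), (z, r))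
      = ∑ r : G, M ((i, g), (z, r)) ((j, g), (z, r)) := fun _ _ => rfl
  simp only [ptr2, Ddec]
  rw [← Finset.mul_sum]
  have : ∑ z : X2, ∑ g : G, ∑ r : G, M ((i, g), (z, r)) ((j, g), (z, r))
      = ∑ g : G, ∑ zr : X2 × G, M ((i, g), zr) ((j, g), zr) := by
    rw [Finset.sum_comm]
    refine Finset.sum_congr rfl fun g _ => ?_
    rw [Fintype.sum_prod_type]
  rw [this]
  simp only [key]
  have hcard : (Fintype.card G : ℂ) ≠ 0 := by
    exact_mod_cast Fintype.card_ne_zero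
  by_cases hij : i = j <;> simp [hij, Matrix.one_apply, hcard, Prod.ext_iff]

lemma Ddec_psd {M : Matrix ((X1 × G) × (X2 × G)) ((X1 × G) × (X2 × G)) ℂ}
    (hM : M.PosSemidef) : (Ddec M).PosSemidef := by
  rw [Ddec_eq, cardinv_eq]
  exact psd_smul' (by positivity) (psd_sum' _ _ fun gr _ =>
    hM.conjTranspose_mul_mul_same (wk gr))

end AuxLemmas

theorem decoding_map_properties :
    -- (i)
    (IsCompletelyPositive (Ddec (G := G) (X1 := X1) (X2 := X2))) ∧
    (∀ M : Matrix ((X1 × G) × (X2 × G)) ((X1 × G) × (X2 × G)) ℂ,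
      IsCPTPChoi M → IsCPTPChoi (Ddec M)) ∧
    -- (ii)
    (∀ (h : G) (M : Matrix ((X1 × G) × (X2 × G)) ((X1 × G) × (X2 × G)) ℂ),
      Ddec (Vhat h * M * (Vhat h)ᴴ) = Ddec M) ∧
    -- the Hilbert–Schmidt adjoint of `D_X`
    (∀ Φ : Matrix (X1 × X2) (X1 × X2) ℂ →
        Matrix ((X1 × G) × (X2 × G)) ((X1 × G) × (X2 × G)) ℂ,
      (∀ (A : Matrix ((X1 × G) × (X2 × G)) ((X1 × G) × (X2 × G)) ℂ)
          (B : Matrix (X1 × X2) (X1 × X2) ℂ),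
        ((Ddec A)ᴴ * B).trace = (Aᴴ * Φ B).trace) →
      IsCompletelyPositive Φ ∧
      ∀ (h : G) (Y : Matrix (X1 × X2) (X1 × X2) ℂ),
        Vhat h * Φ Y * (Vhat h)ᴴ = Φ Y) := by
  refine ⟨?_, ?_, ?_, ?_⟩
  · intro dE M hM
    rw [ampl_Ddec_eq, cardinv_eq]
    exact psd_smul' (by positivity) (psd_sum' _ _ fun gr _ =>
      hM.conjTranspose_mul_mul_same (WK (Fin dE) gr))
  · intro M hM
    exact ⟨Ddec_psd hM.1, Ddec_tp M hM.2⟩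
  · exact Ddec_absorb
  · intro Φ hΦ
    have hEq : Φ = Dadj := by
      funext B
      refine ext_of_traces fun A => ?_
      rw [← hΦ A B, trace_adj]
    subst hEq
    refine ⟨?_, fun h Y => Dadj_inv h Y⟩
    intro dE M hM
    rw [ampl_Dadj_eq, cardinv_eq]
    exact psd_smul' (by positivity) (psd_sum' _ _ fun gr _ =>
      hM.mul_mul_conjTranspose_same (WK (Fin dE) gr))
end
end
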